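/- arXiv:2412.15866 — 6 statements merged into one kernel-verified Lean document; each statement's English description precedes it below -/
import Mathlib

section
/- Let E, F be m×m real matrices and let Q be an m×m projector matrix (Q² = Q) with im Q = ker E. Then the matrix G₁ = E + F Q is invertible if and only if ker E ∩ {z : F z ∈ im E} = {0}. -/
/-- For a projector `Q` onto `ker E`, the matrix `G₁ = E + F Q` is invertible
iff `ker E ∩ {z : F z ∈ im E} = {0}`. -/
theorem stmt3 (m : ℕ) (E F Q : Matrix (Fin m) (Fin m) ℝ)
    (hQ : Q * Q = Q)
    (hrange : LinearMap.range Q.mulVecLin = LinearMap.ker E.mulVecLin) :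
    IsUnit (E + F * Q) ↔
      LinearMap.ker E.mulVecLin ⊓ (LinearMap.range E.mulVecLin).comap F.mulVecLin = ⊥ := by
  have hEQ : ∀ v, E.mulVec (Q.mulVec v) = 0 := by
    intro v
    have h : Q.mulVecLin v ∈ LinearMap.range Q.mulVecLin := ⟨v, rfl⟩
    rw [hrange, LinearMap.mem_ker] at h
    simpa [Matrix.mulVecLin_apply] using h
  have hQfix : ∀ z, E.mulVec z = 0 → Q.mulVec z = z := by
    intro z hz
    have h : z ∈ LinearMap.range Q.mulVecLin := by
      rw [hrange, LinearMap.mem_ker]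
      simpa [Matrix.mulVecLin_apply] using hz
    obtain ⟨w, hw⟩ := h
    simp only [Matrix.mulVecLin_apply] at hw
    calc Q.mulVec z = Q.mulVec (Q.mulVec w) := by rw [hw]
      _ = (Q * Q).mulVec w := by rw [Matrix.mulVec_mulVec]
      _ = z := by rw [hQ, hw]
  rw [← Matrix.mulVec_injective_iff_isUnit]
  constructor
  · intro hinj
    rw [Submodule.eq_bot_iff]
    rintro z ⟨hz1, hz2⟩
    simp only [SetLike.mem_coe, LinearMap.mem_ker, Matrix.mulVecLin_apply] at hz1
    simp only [SetLike.mem_coe, Submodule.mem_comap, LinearMap.mem_range,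
      Matrix.mulVecLin_apply] at hz2
    obtain ⟨w, hw⟩ := hz2
    have hzfix := hQfix z hz1
    have h1 : (E + F * Q).mulVec z = E.mulVec w := by
      rw [Matrix.add_mulVec, hz1, ← Matrix.mulVec_mulVec, hzfix, hw]; simp
    have h2 : (E + F * Q).mulVec (w - Q.mulVec w) = E.mulVec w := by
      rw [Matrix.add_mulVec, ← Matrix.mulVec_mulVec]
      have hq : Q.mulVec (w - Q.mulVec w) = 0 := by
        rw [Matrix.mulVec_sub, Matrix.mulVec_mulVec, hQ, sub_self]
      rw [hq, Matrix.mulVec_sub, hEQ]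
      simp [Matrix.mulVec_zero]
    have := hinj (h1.trans h2.symm)
    have hQz : Q.mulVec z = 0 := by
      rw [this, Matrix.mulVec_sub, Matrix.mulVec_mulVec, hQ, sub_self]
    rw [hzfix] at hQz
    exact hQz
  · intro hbot
    have hker : ∀ z, (E + F * Q).mulVec z = 0 → z = 0 := by
      intro z hz
      rw [Matrix.add_mulVec, ← Matrix.mulVec_mulVec] at hz
      have hmem : Q.mulVec z ∈ LinearMap.ker E.mulVecLin ⊓
          (LinearMap.range E.mulVecLin).comap F.mulVecLin := by
        refine Submodule.mem_inf.mpr ⟨?_, ?_⟩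
        · rw [LinearMap.mem_ker]
          simpa [Matrix.mulVecLin_apply] using hEQ z
        · simp only [Submodule.mem_comap, LinearMap.mem_range, Matrix.mulVecLin_apply]
          refine ⟨-z, ?_⟩
          have : F.mulVec (Q.mulVec z) = -(E.mulVec z) := by
            linear_combination (norm := module) hz
          rw [this, Matrix.mulVec_neg]
        
      rw [hbot, Submodule.mem_bot] at hmem
      rw [hmem, Matrix.mulVec_zero, add_zero] at hz
      have := hQfix z hz
      rw [hmem] at this
      exact this.symm
    intro a b hab
    have : (E + F * Q).mulVec (a - b) = 0 := by
      rw [Matrix.mulVec_sub, hab, sub_self]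
    have := hker _ this
    exact sub_eq_zero.mp this
end

section
/- Let N be an l×l real matrix and k ≥ 1. Consider the (k+1)l × (k+1)l block matrix 𝒩 which has N in every diagonal block, the identity I_l in every first subdiagonal block, and zeros elsewhere. Then the kernel of 𝒩 equals {(y₀, …, y_k) : N^{k+1} y_k = 0 and y_i = (−N)^{k−i} y_k for 0 ≤ i ≤ k−1}, and consequently rank 𝒩 = k·l + rank N^{k+1}. -/
/-- The `(k+1)l × (k+1)l` block bidiagonal matrix with `N` in every diagonal block
and the identity in every first subdiagonal block. -/
def arrayN (l k : ℕ) (N : Matrix (Fin l) (Fin l) ℝ) :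
    Matrix (Fin (k + 1) × Fin l) (Fin (k + 1) × Fin l) ℝ :=
  Matrix.of fun p q =>
    if p.1 = q.1 then N p.2 q.2
    else if (q.1 : ℕ) + 1 = (p.1 : ℕ) then (if p.2 = q.2 then 1 else 0) else 0

lemma arrayN_mulVec_apply (l k : ℕ) (N : Matrix (Fin l) (Fin l) ℝ)
    (y : Fin (k + 1) × Fin l → ℝ) (i : Fin (k + 1)) (p : Fin l) :
    (arrayN l k N).mulVec y (i, p)
      = N.mulVec (fun q => y (i, q)) p
        + (if h : (i : ℕ) = 0 then 0 else y (⟨(i : ℕ) - 1, by omega⟩, p)) := by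
  classical
  simp only [arrayN, Matrix.mulVec, dotProduct, Matrix.of_apply]
  rw [Fintype.sum_prod_type]
  have key : ∀ j : Fin (k + 1),
      (∑ q : Fin l, (if i = j then N p q
          else if (j : ℕ) + 1 = (i : ℕ) then (if p = q then (1:ℝ) else 0) else 0) * y (j, q))
      = (if i = j then ∑ q, N p q * y (j, q) else 0)
        + (if (j : ℕ) + 1 = (i : ℕ) then y (j, p) else 0) := by
    intro j
    rcases eq_or_ne i j with h | h
    · subst h
      have h2 : ¬ ((i : ℕ) + 1 = (i : ℕ)) := by omega
      simp [h2, Finset.mul_sum]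
    · have hne : ¬ (i = j) := h
      by_cases hji : (j : ℕ) + 1 = (i : ℕ)
      · simp [hne, hji, ite_mul, Finset.sum_ite_eq]
      · simp [hne, hji]
  rw [Finset.sum_congr rfl (fun j _ => key j), Finset.sum_add_distrib]
  congr 1
  · rw [Finset.sum_ite_eq]
    simp [Matrix.mulVec, dotProduct]
  · by_cases h0 : (i : ℕ) = 0
    · rw [dif_pos h0]
      apply Finset.sum_eq_zero
      intro j _
      rw [if_neg]; omega
    · rw [dif_neg h0]
      rw [Finset.sum_eq_single (⟨(i : ℕ) - 1, by omega⟩ : Fin (k + 1))]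
      · rw [if_pos]; simp; omega
      · intro j _ hj
        rw [if_neg]
        intro hcon
        exact hj (Fin.ext (by simp; omega))
      · intro h; exact absurd (Finset.mem_univ _) h

lemma neg_one_pow_mul (l : ℕ) (N : Matrix (Fin l) (Fin l) ℝ) (k : ℕ) :
    N * (-N) ^ k = ((-1 : ℝ) ^ k) • (N ^ (k + 1)) := by
  have : (-N) = (-1 : ℝ) • N := by simp
  rw [this, smul_pow, mul_smul_comm, pow_succ']

lemma arrayN_ker_iff (l k : ℕ) (hk : 1 ≤ k) (N : Matrix (Fin l) (Fin l) ℝ)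
    (y : Fin (k + 1) × Fin l → ℝ) :
    (arrayN l k N).mulVec y = 0 ↔
      ((N ^ (k + 1)).mulVec (fun p => y (Fin.last k, p)) = 0 ∧
        ∀ i : Fin (k + 1), (i : ℕ) < k →
          (fun p => y (i, p))
            = ((-N) ^ (k - (i : ℕ))).mulVec (fun p => y (Fin.last k, p))) := by
  have hne : ((-1 : ℝ) ^ k) ≠ 0 := by positivity
  have hzero : (arrayN l k N).mulVec y = 0 ↔
      ∀ (i : Fin (k + 1)) (p : Fin l),
        N.mulVec (fun q => y (i, q)) p
          + (if h : (i : ℕ) = 0 then 0 else y (⟨(i : ℕ) - 1, by omega⟩, p)) = 0 := by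
    rw [funext_iff]
    constructor
    · intro h i p; rw [← arrayN_mulVec_apply]; exact h (i, p)
    · intro h x; rw [Pi.zero_apply, arrayN_mulVec_apply]; exact h x.1 x.2
  rw [hzero]
  constructor
  · intro h
    have claim : ∀ d : ℕ, d ≤ k →
        (fun p => y (⟨k - d, by omega⟩, p))
          = ((-N) ^ d).mulVec (fun p => y (Fin.last k, p)) := by
      intro d
      induction d with
      | zero =>
        intro _
        simp only [Nat.sub_zero, pow_zero, Matrix.one_mulVec]
        rfl
      | succ d ih =>
        intro hd
        have ihd := ih (by omega)
        funext p
        have hi := h ⟨k - d, by omega⟩ p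
        rw [dif_neg (by simp; omega)] at hi
        have hidx : ((⟨k - d, by omega⟩ : Fin (k+1)) : ℕ) - 1 = k - (d + 1) := by
          simp; omega
        have heq : (⟨((⟨k - d, by omega⟩ : Fin (k+1)) : ℕ) - 1, by omega⟩ : Fin (k+1))
            = (⟨k - (d + 1), by omega⟩ : Fin (k+1)) := Fin.ext hidx
        rw [heq] at hi
        have : y (⟨k - (d + 1), by omega⟩, p)
            = -(N.mulVec (fun q => y (⟨k - d, by omega⟩, q)) p) := by linarith
        rw [this, ihd, pow_succ', ← Matrix.mulVec_mulVec, Matrix.neg_mulVec]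
        simp
    have hlast : ∀ i : Fin (k + 1), (i : ℕ) ≤ k →
        (fun p => y (i, p)) = ((-N) ^ (k - (i : ℕ))).mulVec (fun p => y (Fin.last k, p)) := by
      intro i hi
      have := claim (k - (i : ℕ)) (by omega)
      have heq : (⟨k - (k - (i : ℕ)), by omega⟩ : Fin (k + 1)) = i := Fin.ext (by simp; omega)
      rwa [heq] at this
    refine ⟨?_, fun i hi => hlast i (by omega)⟩
    · have h0 : N.mulVec (fun q => y ((⟨0, by omega⟩ : Fin (k+1)), q)) = 0 := by
        funext p
        have := h ⟨0, by omega⟩ p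
        simpa using this
      have hy0 : (fun q => y ((⟨0, by omega⟩ : Fin (k+1)), q))
          = ((-N) ^ k).mulVec (fun p => y (Fin.last k, p)) := hlast ⟨0, by omega⟩ (by simp)
      rw [hy0, Matrix.mulVec_mulVec, neg_one_pow_mul, Matrix.smul_mulVec] at h0
      exact (smul_eq_zero.mp h0).resolve_left hne
  · rintro ⟨h1, h2⟩
    have hall : ∀ i : Fin (k + 1),
        (fun p => y (i, p)) = ((-N) ^ (k - (i : ℕ))).mulVec (fun p => y (Fin.last k, p)) := by
      intro i
      rcases lt_or_eq_of_le (Nat.lt_succ_iff.mp i.isLt) with hi | hi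
      · exact h2 i hi
      · have : i = Fin.last k := Fin.ext hi
        subst this
        simp [Fin.val_last, Matrix.one_mulVec]
    intro i p
    by_cases h0 : (i : ℕ) = 0
    · rw [dif_pos h0, add_zero]
      have hi0 : i = ⟨0, by omega⟩ := Fin.ext h0
      have hyi := hall i
      have : N.mulVec (fun q => y (i, q)) = 0 := by
        rw [hyi, Matrix.mulVec_mulVec, h0, Nat.sub_zero, neg_one_pow_mul,
          Matrix.smul_mulVec, h1, smul_zero]
      exact congrFun this p
    · rw [dif_neg h0]
      have hyi := hall i
      have hyim := hall ⟨(i : ℕ) - 1, by omega⟩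
      have hsub : k - (((⟨(i : ℕ) - 1, by omega⟩ : Fin (k+1))) : ℕ) = (k - (i : ℕ)) + 1 := by
        simp; omega
      rw [hsub, pow_succ', ← Matrix.mulVec_mulVec, ← hyi, Matrix.neg_mulVec] at hyim
      have := congrFun hyim p
      simp only [Pi.neg_apply] at this
      rw [this]
      ring

/-- Kernel description and rank of the block bidiagonal array matrix:
`ker 𝒩 = {(y₀,…,y_k) : N^(k+1) y_k = 0, y_i = (-N)^(k-i) y_k}` and
`rank 𝒩 = k·l + rank N^(k+1)`. -/
theorem stmt9 (l k : ℕ) (hk : 1 ≤ k) (N : Matrix (Fin l) (Fin l) ℝ) :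
    (∀ y : Fin (k + 1) × Fin l → ℝ,
      (arrayN l k N).mulVec y = 0 ↔
        ((N ^ (k + 1)).mulVec (fun p => y (Fin.last k, p)) = 0 ∧
          ∀ i : Fin (k + 1), (i : ℕ) < k →
            (fun p => y (i, p))
              = ((-N) ^ (k - (i : ℕ))).mulVec (fun p => y (Fin.last k, p)))) ∧
    (arrayN l k N).rank = k * l + (N ^ (k + 1)).rank := by
  have hker := arrayN_ker_iff l k hk N
  refine ⟨hker, ?_⟩
  have hmem : ∀ y : Fin (k + 1) × Fin l → ℝ,
      y ∈ LinearMap.ker (arrayN l k N).mulVecLin ↔ (arrayN l k N).mulVec y = 0 := by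
    intro y; rw [LinearMap.mem_ker, Matrix.mulVecLin_apply]
  have hmem2 : ∀ z : Fin l → ℝ,
      z ∈ LinearMap.ker (N ^ (k + 1)).mulVecLin ↔ (N ^ (k + 1)).mulVec z = 0 := by
    intro z; rw [LinearMap.mem_ker, Matrix.mulVecLin_apply]
  have e : (LinearMap.ker (arrayN l k N).mulVecLin) ≃ₗ[ℝ]
      (LinearMap.ker (N ^ (k + 1)).mulVecLin) :=
    { toFun := fun y => ⟨fun p => y.1 (Fin.last k, p), by
        rw [hmem2]
        exact ((hker y.1).mp ((hmem y.1).mp y.2)).1⟩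
      map_add' := fun _ _ => rfl
      map_smul' := fun _ _ => rfl
      invFun := fun z => ⟨fun ip => ((-N) ^ (k - (ip.1 : ℕ))).mulVec z.1 ip.2, by
        rw [hmem]
        apply (hker _).mpr
        constructor
        · have hz := (hmem2 z.1).mp z.2
          simpa [Fin.val_last, Nat.sub_self, Matrix.one_mulVec] using hz
        · intro i hi
          funext p
          simp [Fin.val_last, Nat.sub_self, Matrix.one_mulVec]⟩
      left_inv := by
        rintro ⟨y, hy⟩
        apply Subtype.ext
        funext ip
        obtain ⟨i, p⟩ := ip
        show ((-N) ^ (k - (i : ℕ))).mulVec (fun p => y (Fin.last k, p)) p = y (i, p)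
        obtain ⟨h1, h2⟩ := (hker y).mp ((hmem y).mp hy)
        rcases lt_or_eq_of_le (Nat.lt_succ_iff.mp i.isLt) with hi | hi
        · exact (congrFun (h2 i hi) p).symm
        · have hlast : i = Fin.last k := Fin.ext hi
          subst hlast
          simp [Fin.val_last, Nat.sub_self, Matrix.one_mulVec]
      right_inv := by
        intro z
        apply Subtype.ext
        funext p
        simp [Fin.val_last, Nat.sub_self, Matrix.one_mulVec] }
  have hrn1 := LinearMap.finrank_range_add_finrank_ker (arrayN l k N).mulVecLin
  have hrn2 := LinearMap.finrank_range_add_finrank_ker (N ^ (k + 1)).mulVecLin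
  have he := e.finrank_eq
  have hc1 : Module.finrank ℝ (Fin (k + 1) × Fin l → ℝ) = (k + 1) * l := by
    simp [Module.finrank_pi]
  have hc2 : Module.finrank ℝ (Fin l → ℝ) = l := by
    simp [Module.finrank_pi]
  have hd1 : (arrayN l k N).rank
      = Module.finrank ℝ (LinearMap.range (arrayN l k N).mulVecLin) := rfl
  have hd2 : (N ^ (k + 1)).rank
      = Module.finrank ℝ (LinearMap.range (N ^ (k + 1)).mulVecLin) := rfl
  rw [hc1] at hrn1
  rw [hc2] at hrn2
  have hmul : (k + 1) * l = k * l + l := by ring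
  rw [hmul] at hrn1
  rw [hd1, hd2]
  omega
end

section
/- Let M be an (m+n)×(m+n) real matrix. There exists an invertible (m+n)×(m+n) matrix T and an n×n matrix H such that T M equals the block diagonal matrix [[I_m, 0], [0, H]] if and only if every vector in the kernel of M has vanishing first block, i.e. ker M ⊆ {0} × ℝ^n. -/
/-! The kernel condition says exactly that the projection `y ↦ y ∘ Sum.inl` factors through
`M`, i.e. `A * M = [1 | 0]` for some `A`. Such an `A` has a right inverse, so its rows are
linearly independent and extend to an invertible `[A; B]`, which turns `M` into
`[[1, 0], [C, H]]`; a block row operation then clears `C`. Conversely, `T * M * y = 0` forces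
the first block of `y` to vanish. -/

open Matrix Module

theorem LinearMap.exists_comp_eq_of_ker_le {K V W Q : Type*} [Field K] [AddCommGroup V]
    [Module K V] [AddCommGroup W] [Module K W] [AddCommGroup Q] [Module K Q]
    (f : V →ₗ[K] W) (g : V →ₗ[K] Q) (h : ker f ≤ ker g) :
    ∃ l : W →ₗ[K] Q, l ∘ₗ f = g := by
  obtain ⟨s, hs⟩ := ((ker f).liftQ f le_rfl).exists_leftInverse_of_injective
    ((ker f).ker_liftQ_eq_bot f le_rfl le_rfl)
  refine ⟨(ker f).liftQ g h ∘ₗ s, LinearMap.ext fun x => ?_⟩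
  have hsx : s (f x) = (ker f).mkQ x := LinearMap.congr_fun hs ((ker f).mkQ x)
  simp [hsx]

theorem Matrix.exists_mul_eq_of_ker_le {K ι κ μ : Type*} [Field K] [Fintype ι] [DecidableEq ι]
    [Fintype κ] [DecidableEq κ] (M : Matrix ι κ K) (J : Matrix μ κ K)
    (h : ∀ y, M *ᵥ y = 0 → J *ᵥ y = 0) : ∃ A : Matrix μ ι K, A * M = J := by
  obtain ⟨l, hl⟩ := LinearMap.exists_comp_eq_of_ker_le (toLin' M) (toLin' J) fun y => h y
  exact ⟨LinearMap.toMatrix' l, toLin'.injective (by rw [toLin'_mul, toLin'_toMatrix', hl])⟩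

theorem Matrix.linearIndependent_rows_of_mul_eq_one {R m n : Type*} [Ring R] [Fintype m]
    [DecidableEq m] [Fintype n] {A : Matrix m n R} {B : Matrix n m R} (h : A * B = 1) :
    LinearIndependent R A.row := by
  rw [← vecMul_injective_iff]
  refine Function.LeftInverse.injective (g := (· ᵥ* B)) fun x => ?_
  simp [vecMul_vecMul, h]

theorem Module.Basis.sumExtend_apply_inl {K V ι : Type*} [Field K] [AddCommGroup V]
    [Module K V] {v : ι → V} (hv : LinearIndependent K v) (i : ι) :
    Basis.sumExtend hv (Sum.inl i) = v i := by
  simp only [Basis.sumExtend, Basis.reindex_apply, Basis.coe_extend]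
  rfl

theorem LinearIndependent.exists_linearIndependent_sumElim {K V ι κ : Type*} [Field K]
    [AddCommGroup V] [Module K V] [FiniteDimensional K V] [Finite κ] {v : ι → V}
    (hv : LinearIndependent K v) (hV : finrank K V = Nat.card ι + Nat.card κ) :
    ∃ w : κ → V, LinearIndependent K (Sum.elim v w) := by
  let b := Basis.sumExtend hv
  have : Finite (ι ⊕ Basis.sumExtendIndex hv) := Module.Finite.finite_basis b
  have : Finite ι := Finite.sum_left (Basis.sumExtendIndex hv)
  have : Finite (Basis.sumExtendIndex hv) := Finite.sum_right ι
  have hcard : Nat.card (Basis.sumExtendIndex hv) = Nat.card κ := by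
    have := finrank_eq_nat_card_basis b
    rw [Nat.card_sum] at this
    omega
  obtain ⟨e⟩ := Finite.card_eq.mp hcard
  refine ⟨b ∘ Sum.inr ∘ e.symm, ?_⟩
  have hb : Sum.elim v (b ∘ Sum.inr ∘ e.symm) = b ∘ Sum.map id e.symm := by
    ext (i | k)
    · exact (Basis.sumExtend_apply_inl hv i).symm
    · rfl
  rw [hb]
  exact b.linearIndependent.comp _
    (Sum.map_injective.mpr ⟨Function.injective_id, e.symm.injective⟩)

theorem Matrix.exists_isUnit_fromRows {K m n : Type*} [Field K] [Fintype m] [DecidableEq m]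
    [Fintype n] [DecidableEq n] {A : Matrix m (m ⊕ n) K} (hA : LinearIndependent K A.row) :
    ∃ B : Matrix n (m ⊕ n) K, IsUnit (fromRows A B) := by
  obtain ⟨B, hB⟩ := hA.exists_linearIndependent_sumElim (κ := n) (by simp)
  exact ⟨B, linearIndependent_rows_iff_isUnit.mp hB⟩

theorem Matrix.exists_isUnit_mul_fromBlocks_one_zero {R m n : Type*} [CommRing R] [Fintype m]
    [DecidableEq m] [Fintype n] [DecidableEq n] (C : Matrix n m R) (H : Matrix n n R) :
    ∃ L : Matrix (m ⊕ n) (m ⊕ n) R,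
      IsUnit L ∧ L * fromBlocks 1 0 C H = fromBlocks 1 0 0 H := by
  refine ⟨fromBlocks 1 0 (-C) 1, ?_, by simp [fromBlocks_multiply]⟩
  rw [isUnit_iff_isUnit_det, det_fromBlocks_zero₁₂]
  simp

/-- 1-fullness characterization: there exist an invertible `T` and a matrix `H`
with `T M = [[I, 0], [0, H]]` iff every kernel vector of `M` has vanishing
first block. -/
theorem stmt10 (m n : ℕ) (M : Matrix (Fin m ⊕ Fin n) (Fin m ⊕ Fin n) ℝ) :
    (∃ T : Matrix (Fin m ⊕ Fin n) (Fin m ⊕ Fin n) ℝ, IsUnit T ∧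
        ∃ H : Matrix (Fin n) (Fin n) ℝ, T * M = Matrix.fromBlocks 1 0 0 H) ↔
    (∀ y : Fin m ⊕ Fin n → ℝ, M.mulVec y = 0 → ∀ i : Fin m, y (Sum.inl i) = 0) := by
  constructor
  · rintro ⟨T, -, H, hTM⟩ y hy i
    have hTMy : (T * M) *ᵥ y = 0 := by rw [← mulVec_mulVec, hy, mulVec_zero]
    rw [hTM] at hTMy
    simpa [fromBlocks_mulVec] using congrFun hTMy (Sum.inl i)
  · intro hker
    obtain ⟨A, hA⟩ := exists_mul_eq_of_ker_le M (fromCols (1 : Matrix (Fin m) (Fin m) ℝ) 0)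
      fun y hy => funext fun i => by simpa [fromCols_mulVec] using hker y hy i
    have hAM : A * (M * (fromRows 1 0 : Matrix (Fin m ⊕ Fin n) (Fin m) ℝ)) = 1 := by
      rw [← Matrix.mul_assoc, hA, fromCols_mul_fromRows]
      simp
    obtain ⟨B, hB⟩ := exists_isUnit_fromRows (linearIndependent_rows_of_mul_eq_one hAM)
    obtain ⟨C, H, hBM⟩ : ∃ C H, B * M = fromCols C H := ⟨_, _, (fromCols_toCols _).symm⟩
    obtain ⟨L, hL, hLM⟩ := exists_isUnit_mul_fromBlocks_one_zero C H
    refine ⟨L * fromRows A B, hL.mul hB, H, ?_⟩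
    rw [Matrix.mul_assoc, fromRows_mul, hA, hBM, fromRows_fromCols_eq_fromBlocks, hLM]
end

section
/- Let N be an l×l real matrix with N^k = 0. Then the (k+1)l × (k+1)l block bidiagonal matrix 𝒩 (with N on the diagonal blocks and I_l on the first subdiagonal blocks) is 1-full: every element (y₀,…,y_k) of ker 𝒩 satisfies y₀ = 0, and hence there is an invertible matrix T with T𝒩 = [[I_l, 0],[0, H]] for some H. -/
/-!
Write `𝒩` as a `(k+1) × (k+1)` block matrix over the ring `R` of `l × l` matrices: `N` on the
diagonal, `1` on the subdiagonal. The block row `t = (0, 1, -N, N², …, (-N)^(k-1))` satisfies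
`t 𝒩 = (1, 0, …, 0)`: the entries telescope, and the last one is `±N^k = 0`. Taking `t` as the
first block row of `T`, the block row `(1, -N, 0, …)` (which kills the first block column
`(N, 1, 0, …)` of `𝒩`) as the second, and identity rows below gives an invertible `T` with
`T 𝒩` of the required form. Applying `T` to `𝒩 y = 0` then reads off `y₀ = 0`.
-/

open Matrix

def bidiag {R : Type*} [Ring R] (k : ℕ) (n : R) : Matrix (Fin (k + 1)) (Fin (k + 1)) R :=
  of fun i j => if i = j then n else if (j : ℕ) + 1 = i then 1 else 0

theorem arrayN_eq_compRingEquiv_bidiag (l k : ℕ) (N : Matrix (Fin l) (Fin l) ℝ) :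
    arrayN l k N = compRingEquiv (Fin (k + 1)) (Fin l) ℝ (bidiag k N) := by
  ext ⟨i, p⟩ ⟨j, q⟩
  by_cases h : i = j
  · simp [arrayN, bidiag, h]
  · by_cases h' : (j : ℕ) + 1 = i <;> simp [arrayN, bidiag, h, h', one_apply]

section Bidiag

variable {R : Type*} [Ring R] (k : ℕ) (n : R)

theorem bidiag_apply_eq_add (i j : Fin (k + 1)) :
    bidiag k n i j = (if i = j then n else 0) + if (j : ℕ) + 1 = i then 1 else 0 := by
  by_cases h : i = j <;> simp [bidiag, h]

theorem mul_bidiag_apply (M : Matrix (Fin (k + 1)) (Fin (k + 1)) R) (i c : Fin (k + 1)) :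
    (M * bidiag k n) i c = M i c * n + if h : (c : ℕ) + 1 < k + 1 then M i ⟨c + 1, h⟩ else 0 := by
  simp only [mul_apply, bidiag_apply_eq_add, mul_add, mul_ite, mul_zero, mul_one,
    Finset.sum_add_distrib, Finset.sum_ite_eq', Finset.mem_univ, if_true]
  split_ifs with h
  · have hc : ∀ j : Fin (k + 1), (c : ℕ) + 1 = j ↔ ⟨c + 1, h⟩ = j := fun j => by
      rw [Fin.ext_iff]
    simp only [hc, Finset.sum_ite_eq, Finset.mem_univ, if_true]
  · congr 1
    exact Finset.sum_eq_zero fun j _ => if_neg fun hj => h (by omega)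

def bidiagReducer : Matrix (Fin (k + 1)) (Fin (k + 1)) R :=
  of fun i j =>
    if (i : ℕ) = 0 then (if (j : ℕ) = 0 then 0 else (-n) ^ ((j : ℕ) - 1))
    else if (i : ℕ) = 1 then (if (j : ℕ) = 0 then 1 else if (j : ℕ) = 1 then -n else 0)
    else if i = j then 1 else 0

def bidiagReducerInv : Matrix (Fin (k + 1)) (Fin (k + 1)) R :=
  of fun i j =>
    if (i : ℕ) = 0 then (if (j : ℕ) = 0 then n else if (j : ℕ) = 1 then 1 else (-n) ^ (j : ℕ))
    else if (i : ℕ) = 1 then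
      (if (j : ℕ) = 0 then 1 else if (j : ℕ) = 1 then 0 else -(-n) ^ ((j : ℕ) - 1))
    else if i = j then 1 else 0

theorem bidiagReducer_mul_bidiagReducerInv :
    bidiagReducer (k + 1) n * bidiagReducerInv (k + 1) n = 1 := by
  ext i j
  refine Fin.cases ?_ (Fin.cases ?_ fun i => ?_) i <;>
  refine Fin.cases ?_ (Fin.cases ?_ fun j => ?_) j <;>
  simp [mul_apply, Fin.sum_univ_succ, bidiagReducer, bidiagReducerInv, one_apply,
    Fin.succ_succ_ne_one, (Fin.succ_ne_zero _).symm, (Fin.succ_succ_ne_one _).symm,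
    pow_succ' (-n) (_ + 1)]

theorem bidiagReducer_mul_bidiag_apply_zero_left (hn : n ^ (k + 1) = 0) (c : Fin (k + 2)) :
    (bidiagReducer (k + 1) n * bidiag (k + 1) n) 0 c = (1 : Matrix (Fin (k + 2)) _ R) 0 c := by
  rw [mul_bidiag_apply]
  refine Fin.cases ?_ (fun c => ?_) c
  · simp [bidiagReducer]
  · split_ifs with h
    · simp [bidiagReducer, pow_succ, one_apply, (Fin.succ_ne_zero _).symm]
    · have hc : (c : ℕ) = k := by simp at h; omega
      simp only [bidiagReducer, of_apply, Fin.val_zero, Fin.val_succ, if_true, hc,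
        add_eq_zero, one_ne_zero, and_false, if_false, Nat.add_sub_cancel, add_zero,
        one_apply_ne (Fin.succ_ne_zero c).symm]
      rw [neg_pow, mul_assoc, ← pow_succ, hn, mul_zero]

theorem bidiagReducer_mul_bidiag_apply_zero_right (i : Fin (k + 2)) (hi : i ≠ 0) :
    (bidiagReducer (k + 1) n * bidiag (k + 1) n) i 0 = 0 := by
  refine Fin.cases (absurd rfl) (Fin.cases (fun _ => ?_) fun i _ => ?_) i hi <;>
  simp [mul_apply, Fin.sum_univ_succ, bidiagReducer, bidiag]

end Bidiag

theorem blockRow_eq_zero_of_mulVec_eq_zero {ι α K : Type*} [Fintype ι] [Fintype α]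
    [DecidableEq α] [Semiring K] (A T : Matrix (ι × α) (ι × α) K) (i₀ : ι)
    (hdiag : ∀ p q : α, (T * A) (i₀, p) (i₀, q) = if p = q then 1 else 0)
    (hoff : ∀ (p : α) (jq : ι × α), jq.1 ≠ i₀ → (T * A) (i₀, p) jq = 0)
    (y : ι × α → K) (hy : A *ᵥ y = 0) (p : α) : y (i₀, p) = 0 := by
  have h := congrFun (mulVec_mulVec y T A) (i₀, p)
  rw [hy, mulVec_zero, Pi.zero_apply, mulVec, dotProduct, Fintype.sum_prod_type,
    Finset.sum_eq_single i₀ (fun j _ hj => Finset.sum_eq_zero fun q _ => by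
      rw [hoff p (j, q) hj, zero_mul]) (by simp)] at h
  simpa [hdiag, ite_mul] using h.symm

theorem exists_isUnit_mul_arrayN_blockForm (l k : ℕ) (N : Matrix (Fin l) (Fin l) ℝ)
    (hN : N ^ k = 0) :
    ∃ T : Matrix (Fin (k + 1) × Fin l) (Fin (k + 1) × Fin l) ℝ, IsUnit T ∧
      (∀ p q : Fin l,
          (T * arrayN l k N) (0, p) (0, q) = if p = q then (1 : ℝ) else 0) ∧
      (∀ p : Fin l, ∀ jq : Fin (k + 1) × Fin l, jq.1 ≠ 0 →
          (T * arrayN l k N) (0, p) jq = 0) ∧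
      (∀ ip : Fin (k + 1) × Fin l, ip.1 ≠ 0 → ∀ q : Fin l,
          (T * arrayN l k N) ip (0, q) = 0) := by
  obtain _ | k := k
  · have : IsEmpty (Fin l) := ⟨fun p => by simpa using congrFun₂ hN p p⟩
    exact ⟨1, isUnit_one, isEmptyElim, isEmptyElim, fun _ _ => isEmptyElim⟩
  set E := compRingEquiv (Fin (k + 2)) (Fin l) ℝ
  have hTB : E (bidiagReducer (k + 1) N) * arrayN l (k + 1) N
      = E (bidiagReducer (k + 1) N * bidiag (k + 1) N) := by
    rw [arrayN_eq_compRingEquiv_bidiag, map_mul]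
  refine ⟨E (bidiagReducer (k + 1) N),
    (IsUnit.of_mul_eq_one _ (bidiagReducer_mul_bidiagReducerInv k N)).map E, ?_, ?_, ?_⟩ <;>
    simp only [hTB]
  · intro p q
    simp [E, bidiagReducer_mul_bidiag_apply_zero_left k N hN, one_apply]
  · intro p jq hj
    simp [E, bidiagReducer_mul_bidiag_apply_zero_left k N hN, one_apply_ne hj.symm]
  · intro ip hi q
    simp [E, bidiagReducer_mul_bidiag_apply_zero_right k N ip.1 hi]

/-- If `N^k = 0` then the block bidiagonal array matrix `𝒩` is 1-full:
every kernel element has vanishing first block `y₀ = 0`, and there is an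
invertible `T` such that `T 𝒩` has the block form `[[I_l, 0], [0, H]]`. -/
theorem stmt11 (l k : ℕ) (N : Matrix (Fin l) (Fin l) ℝ) (hN : N ^ k = 0) :
    (∀ y : Fin (k + 1) × Fin l → ℝ, (arrayN l k N).mulVec y = 0 →
        ∀ p : Fin l, y (0, p) = 0) ∧
    ∃ T : Matrix (Fin (k + 1) × Fin l) (Fin (k + 1) × Fin l) ℝ, IsUnit T ∧
      (∀ p q : Fin l,
          (T * arrayN l k N) (0, p) (0, q) = if p = q then (1 : ℝ) else 0) ∧
      (∀ p : Fin l, ∀ jq : Fin (k + 1) × Fin l, jq.1 ≠ 0 →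
          (T * arrayN l k N) (0, p) jq = 0) ∧
      (∀ ip : Fin (k + 1) × Fin l, ip.1 ≠ 0 → ∀ q : Fin l,
          (T * arrayN l k N) ip (0, q) = 0) := by
  obtain ⟨T, hT, hdiag, hoff, hcol⟩ := exists_isUnit_mul_arrayN_blockForm l k N hN
  exact ⟨blockRow_eq_zero_of_mulVec_eq_zero _ T 0 hdiag hoff, T, hT, hdiag, hoff, hcol⟩
end

section
/- Let N be a real n×n matrix with N^μ = 0 for some μ ∈ ℕ, and let v : ℝ → ℝ^n be a smooth (C^∞) function satisfying N · v'(t) + v(t) = 0 for all t ∈ ℝ. Then v is identically zero. -/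
/-- If `N` is nilpotent and the smooth function `v` satisfies the homogeneous
DAE `N v' + v = 0`, then `v ≡ 0`. -/
theorem stmt12 (n μ : ℕ) (N : Matrix (Fin n) (Fin n) ℝ) (hN : N ^ μ = 0)
    (v : ℝ → Fin n → ℝ) (hv : ContDiff ℝ (⊤ : ℕ∞) v)
    (heq : ∀ t : ℝ, N.mulVec (deriv v t) + v t = 0) :
    v = 0 := by
  have hdif : ∀ k : ℕ, Differentiable ℝ (iteratedDeriv k v) := fun k =>
    hv.differentiable_iteratedDeriv k (by exact_mod_cast lt_top_iff_ne_top.2 (by simp))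
  -- differentiated relations
  have key : ∀ k : ℕ, ∀ t : ℝ,
      iteratedDeriv k v t = -N.mulVec (iteratedDeriv (k + 1) v t) := by
    intro k
    induction k with
    | zero =>
      intro t
      have := heq t
      simp only [iteratedDeriv_zero, zero_add, iteratedDeriv_one]
      exact eq_neg_of_add_eq_zero_right this
    | succ k ih =>
      intro t
      have hfun : iteratedDeriv k v = fun s => -N.mulVec (iteratedDeriv (k + 1) v s) :=
        funext ih
      have h1 : iteratedDeriv (k + 1) v t = deriv (iteratedDeriv k v) t := by
        rw [iteratedDeriv_succ]
      have h2 : deriv (iteratedDeriv k v) t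
          = deriv (fun s => -N.mulVec (iteratedDeriv (k + 1) v s)) t := by
        rw [hfun]
      have h3 : deriv (fun s => -N.mulVec (iteratedDeriv (k + 1) v s)) t
          = -N.mulVec (deriv (iteratedDeriv (k + 1) v) t) := by
        have hL := (N.mulVecLin.toContinuousLinearMap.hasFDerivAt.comp_hasDerivAt t
          ((hdif (k + 1)) t).hasDerivAt)
        have := hL.neg
        simpa [Function.comp_def] using this.deriv
      rw [h1, h2, h3, ← iteratedDeriv_succ]
  -- power formula
  have pow : ∀ k : ℕ, ∀ t : ℝ,
      v t = ((-1 : ℝ) ^ k) • (N ^ k).mulVec (iteratedDeriv k v t) := by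
    intro k
    induction k with
    | zero => intro t; simp
    | succ k ih =>
      intro t
      rw [ih t, key k t]
      rw [pow_succ, pow_succ]
      rw [Matrix.mulVec_neg, Matrix.mulVec_mulVec]
      rw [smul_neg, ← neg_smul]
      ring_nf
  funext t
  have := pow μ t
  rw [hN] at this
  simpa using this
end

section
/- Let Ω be a d×d real matrix and N an a×a real matrix with N^μ = 0, and consider the homogeneous DAE E x' + F x = 0 on ℝ with E = diag(I_d, N) and F = diag(Ω, I_a), for smooth functions x : ℝ → ℝ^{d+a}. Then the set of smooth solutions is a real vector space of dimension exactly d; more precisely, writing x = (u, v) with u ℝ^d-valued and v ℝ^a-valued, x is a smooth solution if and only if v ≡ 0 and u' + Ω u = 0, and the evaluation map x ↦ u(0) is a linear isomorphism from the solution space onto ℝ^d. -/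
open NormedSpace

lemma clm_hasDerivAt {E F : Type*} [NormedAddCommGroup E] [NormedSpace ℝ E]
    [NormedAddCommGroup F] [NormedSpace ℝ F] (L : E →L[ℝ] F) {f : ℝ → E} {f' : E} {t : ℝ}
    (hf : HasDerivAt f f' t) : HasDerivAt (fun s => L (f s)) (L f') t :=
  L.hasFDerivAt.comp_hasDerivAt t hf

lemma nilpotent_aux {a μ : ℕ} (N : Matrix (Fin a) (Fin a) ℝ) (hN : N ^ μ = 0)
    (v : ℝ → (Fin a → ℝ)) (hv : ContDiff ℝ (⊤ : ℕ∞) v)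
    (heq : ∀ t, N.mulVec (deriv v t) + v t = 0) : ∀ t, v t = 0 := by
  have hsm : ∀ k : ℕ, ContDiff ℝ (⊤ : ℕ∞) (iteratedDeriv k v) := by
    intro k; rw [iteratedDeriv_eq_iterate]; exact hv.iterate_deriv k
  have hdiff : ∀ k t, HasDerivAt (iteratedDeriv k v) (iteratedDeriv (k + 1) v t) t := by
    intro k t
    rw [iteratedDeriv_succ]
    exact ((hsm k).differentiable (by simp) t).hasDerivAt
  set L : (Fin a → ℝ) →L[ℝ] (Fin a → ℝ) := (Matrix.mulVecLin N).toContinuousLinearMap with hL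
  have hLapp : ∀ w, L w = N.mulVec w := fun w => by simp [hL]
  have key : ∀ k, ∀ t, N.mulVec (iteratedDeriv (k + 1) v t) + iteratedDeriv k v t = 0 := by
    intro k; induction k with
    | zero => intro t; simpa [iteratedDeriv_one, iteratedDeriv_zero] using heq t
    | succ k ih =>
      intro t
      have h1 : (iteratedDeriv k v) = fun s => -(L (iteratedDeriv (k + 1) v s)) := by
        funext s
        rw [hLapp]
        exact eq_neg_of_add_eq_zero_right (by simpa [add_comm] using ih s)
      have h2 : HasDerivAt (iteratedDeriv k v)
          (-(L (iteratedDeriv (k + 2) v t))) t := by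
        rw [h1]
        exact (clm_hasDerivAt L (hdiff (k + 1) t)).neg
      have h3 := (hdiff k t).unique h2
      show N.mulVec (iteratedDeriv (k + 2) v t) + iteratedDeriv (k + 1) v t = 0
      rw [h3, hLapp]
      exact add_neg_cancel _
  have hzero : ∀ k, ∀ t, v t = ((-1 : ℝ) ^ k) • (N ^ k).mulVec (iteratedDeriv k v t) := by
    intro k; induction k with
    | zero => intro t; simp [iteratedDeriv_zero]
    | succ k ih =>
      intro t
      have h1 : iteratedDeriv k v t = -(N.mulVec (iteratedDeriv (k + 1) v t)) :=
        eq_neg_of_add_eq_zero_right (by simpa [add_comm] using key k t)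
      rw [ih t, h1, Matrix.mulVec_neg, Matrix.mulVec_mulVec, ← pow_succ, pow_succ (-1 : ℝ)]
      module
  intro t
  have := hzero μ t
  rw [hN] at this
  simpa using this

lemma ode_unique_zero {W : Type*} [NormedAddCommGroup W] [NormedSpace ℝ W] [CompleteSpace W]
    (B : W →L[ℝ] W) (f : ℝ → W) (hf : ∀ t, HasDerivAt f (B (f t)) t) (h0 : f 0 = 0) :
    ∀ t, f t = 0 := by
  set g : ℝ → W := fun t => (NormedSpace.exp ((-t) • B)) (f t) with hg
  have hg' : ∀ t, HasDerivAt g 0 t := by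
    intro t
    have h1 : HasDerivAt (fun s : ℝ => NormedSpace.exp ((-s) • B)) (-(NormedSpace.exp ((-t) • B) * B)) t := by
      have h := (hasDerivAt_exp_smul_const (𝕂 := ℝ) B (-t)).scomp t (hasDerivAt_neg t)
      simpa [Function.comp_def, neg_smul] using h
    have h2 := h1.clm_apply (hf t)
    convert h2 using 1
    simp [ContinuousLinearMap.mul_apply]
  have hgc : ∀ t, g t = g 0 :=
    fun t => is_const_of_deriv_eq_zero (fun s => (hg' s).differentiableAt)
      (fun s => (hg' s).deriv) t 0
  have hg0 : g 0 = 0 := by simp [hg, h0]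
  intro t
  have h3 : NormedSpace.exp (t • B) * NormedSpace.exp ((-t) • B) = 1 := by
    have hc : Commute (t • B) ((-t) • B) := by
      rw [neg_smul]; exact (Commute.refl (t • B)).neg_right
    letI : NormedAlgebra ℚ (W →L[ℝ] W) := NormedAlgebra.restrictScalars ℚ ℝ _
    rw [← exp_add_of_commute hc]
    have : t • B + (-t) • B = 0 := by module
    rw [this, exp_zero]
  have h4 : (NormedSpace.exp (t • B)) (g t) = 0 := by rw [hgc t, hg0, map_zero]
  calc f t = (NormedSpace.exp (t • B) * NormedSpace.exp ((-t) • B)) (f t) := by rw [h3]; simp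
    _ = (NormedSpace.exp (t • B)) (g t) := by simp [hg, ContinuousLinearMap.mul_apply]
    _ = 0 := h4

lemma exp_apply_smooth {W : Type*} [NormedAddCommGroup W] [NormedSpace ℝ W] [CompleteSpace W]
    (B : W →L[ℝ] W) (c : W) : ContDiff ℝ (⊤ : ℕ∞) (fun t : ℝ => (NormedSpace.exp (t • B)) c) := by
  have h1 : ContDiff ℝ (⊤ : ℕ∞) (fun t : ℝ => t • B) := contDiff_id.smul contDiff_const
  have hA : AnalyticOnNhd ℝ (NormedSpace.exp : (W →L[ℝ] W) → (W →L[ℝ] W)) Set.univ :=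
    fun x _ => NormedSpace.exp_analytic (𝕂 := ℝ) x
  exact (ContinuousLinearMap.apply ℝ W c).contDiff.comp (hA.contDiff.comp h1)

lemma exp_apply_hasDeriv {W : Type*} [NormedAddCommGroup W] [NormedSpace ℝ W] [CompleteSpace W]
    (B : W →L[ℝ] W) (c : W) (t : ℝ) :
    HasDerivAt (fun t : ℝ => (NormedSpace.exp (t • B)) c) (B ((NormedSpace.exp (t • B)) c)) t := by
  have h := (hasDerivAt_exp_smul_const' (𝕂 := ℝ) B t).clm_apply (hasDerivAt_const t c)
  simpa [ContinuousLinearMap.mul_apply] using h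

/-- For the homogeneous DAE `E x' + F x = 0` with `E = diag(I_d, N)`,
`F = diag(Ω, I_a)` and `N` nilpotent: a smooth `x = (u, v)` solves the DAE iff
`v ≡ 0` and `u' + Ω u = 0`; the set of smooth solutions forms a submodule of
dimension `d`, and evaluation `x ↦ u(0)` is a linear isomorphism onto `ℝ^d`. -/
theorem stmt17 (d a μ : ℕ) (Ω : Matrix (Fin d) (Fin d) ℝ)
    (N : Matrix (Fin a) (Fin a) ℝ) (hN : N ^ μ = 0) :
    (∀ x : ℝ → (Fin d ⊕ Fin a → ℝ), ContDiff ℝ (⊤ : ℕ∞) x →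
      ((∀ t, (Matrix.fromBlocks (1 : Matrix (Fin d) (Fin d) ℝ) 0 0 N).mulVec (deriv x t)
            + (Matrix.fromBlocks Ω 0 0 (1 : Matrix (Fin a) (Fin a) ℝ)).mulVec (x t) = 0) ↔
        ((∀ t, ∀ i : Fin a, x t (Sum.inr i) = 0) ∧
          ∀ t, deriv (fun s => fun i : Fin d => x s (Sum.inl i)) t
              + Ω.mulVec (fun i => x t (Sum.inl i)) = 0))) ∧
    ∃ Sol : Submodule ℝ (ℝ → (Fin d ⊕ Fin a → ℝ)),
      (∀ x, x ∈ Sol ↔ (ContDiff ℝ (⊤ : ℕ∞) x ∧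
          ∀ t, (Matrix.fromBlocks (1 : Matrix (Fin d) (Fin d) ℝ) 0 0 N).mulVec (deriv x t)
            + (Matrix.fromBlocks Ω 0 0 (1 : Matrix (Fin a) (Fin a) ℝ)).mulVec (x t) = 0)) ∧
      Module.finrank ℝ Sol = d ∧
      ∃ e : Sol ≃ₗ[ℝ] (Fin d → ℝ),
        ∀ x : Sol, e x = fun i => (x : ℝ → (Fin d ⊕ Fin a → ℝ)) 0 (Sum.inl i) := by
  -- projections as continuous linear maps
  set Pl : ((Fin d ⊕ Fin a → ℝ)) →L[ℝ] (Fin d → ℝ) :=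
    (LinearMap.funLeft ℝ ℝ Sum.inl).toContinuousLinearMap with hPl
  set Pr : ((Fin d ⊕ Fin a → ℝ)) →L[ℝ] (Fin a → ℝ) :=
    (LinearMap.funLeft ℝ ℝ Sum.inr).toContinuousLinearMap with hPr
  have hPlapp : ∀ z : (Fin d ⊕ Fin a → ℝ), Pl z = z ∘ Sum.inl := fun z => by simp [hPl]; rfl
  have hPrapp : ∀ z : (Fin d ⊕ Fin a → ℝ), Pr z = z ∘ Sum.inr := fun z => by simp [hPr]; rfl
  -- Part 1
  have part1 : ∀ x : ℝ → (Fin d ⊕ Fin a → ℝ), ContDiff ℝ (⊤ : ℕ∞) x →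
      ((∀ t, (Matrix.fromBlocks (1 : Matrix (Fin d) (Fin d) ℝ) 0 0 N).mulVec (deriv x t)
            + (Matrix.fromBlocks Ω 0 0 (1 : Matrix (Fin a) (Fin a) ℝ)).mulVec (x t) = 0) ↔
        ((∀ t, ∀ i : Fin a, x t (Sum.inr i) = 0) ∧
          ∀ t, deriv (fun s => fun i : Fin d => x s (Sum.inl i)) t
              + Ω.mulVec (fun i => x t (Sum.inl i)) = 0)) := by
    intro x hx
    have hxd : ∀ t, HasDerivAt x (deriv x t) t :=
      fun t => (hx.differentiable (by simp) t).hasDerivAt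
    have hud : ∀ t, HasDerivAt (fun s => fun i : Fin d => x s (Sum.inl i))
        ((deriv x t) ∘ Sum.inl) t := by
      intro t
      have := clm_hasDerivAt Pl (hxd t)
      simpa [hPlapp, Function.comp_def] using this
    have hvd : ∀ t, HasDerivAt (fun s => fun i : Fin a => x s (Sum.inr i))
        ((deriv x t) ∘ Sum.inr) t := by
      intro t
      have := clm_hasDerivAt Pr (hxd t)
      simpa [hPrapp, Function.comp_def] using this
    constructor
    · intro heq
      have hinl : ∀ t i, deriv x t (Sum.inl i)
          + Ω.mulVec (fun j => x t (Sum.inl j)) i = 0 := by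
        intro t i
        have := congrFun (heq t) (Sum.inl i)
        simpa [Matrix.fromBlocks_mulVec, Matrix.one_mulVec, Matrix.zero_mulVec,
          Function.comp_def] using this
      have hinr : ∀ t i, N.mulVec (fun j => deriv x t (Sum.inr j)) i
          + x t (Sum.inr i) = 0 := by
        intro t i
        have := congrFun (heq t) (Sum.inr i)
        simpa [Matrix.fromBlocks_mulVec, Matrix.one_mulVec, Matrix.zero_mulVec,
          Function.comp_def] using this
      -- v solves the nilpotent part
      have hv : ContDiff ℝ (⊤ : ℕ∞) (fun s => fun i : Fin a => x s (Sum.inr i)) := by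
        apply contDiff_pi.2
        intro i
        exact (contDiff_pi.1 (hx.of_le (by simp)) (Sum.inr i))
      have hveq : ∀ t, N.mulVec (deriv (fun s => fun i : Fin a => x s (Sum.inr i)) t)
          + (fun i : Fin a => x t (Sum.inr i)) = 0 := by
        intro t
        rw [(hvd t).deriv]
        funext i
        simpa [Function.comp_def] using hinr t i
      have hv0 := nilpotent_aux N hN _ hv hveq
      refine ⟨fun t i => congrFun (hv0 t) i, ?_⟩
      intro t
      rw [(hud t).deriv]
      funext i
      simpa [Function.comp_def] using hinl t i
    · rintro ⟨hv0, hu⟩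
      intro t
      have hvconst : (fun s => fun i : Fin a => x s (Sum.inr i)) = fun _ => (0 : Fin a → ℝ) := by
        funext s i; exact hv0 s i
      have hdr : (deriv x t) ∘ Sum.inr = 0 := by
        have h1 := (hvd t).deriv
        rw [hvconst] at h1
        rw [← h1, deriv_const]
      rw [Matrix.fromBlocks_mulVec, Matrix.fromBlocks_mulVec]
      funext z
      cases z with
      | inl i =>
        have := congrFun (hu t) i
        rw [(hud t).deriv] at this
        simpa [Matrix.one_mulVec, Matrix.zero_mulVec, Function.comp_def] using this
      | inr i =>
        have h2 : x t (Sum.inr i) = 0 := hv0 t i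
        simp [Matrix.one_mulVec, Matrix.zero_mulVec, hdr, h2, Function.comp_def]
  refine ⟨part1, ?_⟩
  -- Part 2
  set A : (Fin d → ℝ) →L[ℝ] (Fin d → ℝ) :=
    (Matrix.mulVecLin (-Ω)).toContinuousLinearMap with hA
  have hAapp : ∀ w, A w = (-Ω).mulVec w := fun w => by simp [hA, Matrix.neg_mulVec]
  set sol : (Fin d → ℝ) → ℝ → (Fin d → ℝ) := fun c t => (NormedSpace.exp (t • A)) c with hsol
  have hsol0 : ∀ c, sol c 0 = c := by
    intro c; simp [hsol, NormedSpace.exp_zero]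
  have hsold : ∀ c t, HasDerivAt (sol c) (A (sol c t)) t := fun c t => exp_apply_hasDeriv A c t
  set Φ : (Fin d → ℝ) →ₗ[ℝ] (ℝ → (Fin d ⊕ Fin a → ℝ)) :=
    { toFun := fun c => fun t => Sum.elim (sol c t) 0
      map_add' := by
        intro c₁ c₂; funext t z
        cases z <;> simp [hsol]
      map_smul' := by
        intro r c; funext t z
        cases z <;> simp [hsol] } with hΦ
  have hΦapp : ∀ c t, Φ c t = Sum.elim (sol c t) 0 := fun c t => rfl
  set Sol := LinearMap.range Φ with hSol
  -- the solution property
  have hmem : ∀ x, x ∈ Sol ↔ (ContDiff ℝ (⊤ : ℕ∞) x ∧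
      ∀ t, (Matrix.fromBlocks (1 : Matrix (Fin d) (Fin d) ℝ) 0 0 N).mulVec (deriv x t)
        + (Matrix.fromBlocks Ω 0 0 (1 : Matrix (Fin a) (Fin a) ℝ)).mulVec (x t) = 0) := by
    intro x
    constructor
    · rintro ⟨c, rfl⟩
      have hsm : ContDiff ℝ (⊤ : ℕ∞) (Φ c) := by
        apply contDiff_pi.2
        intro z
        cases z with
        | inl i =>
          exact (contDiff_pi.1 (exp_apply_smooth A c) i)
        | inr i => exact contDiff_const
      refine ⟨hsm, ?_⟩
      rw [part1 (Φ c) hsm]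
      constructor
      · intro t i; rfl
      · intro t
        have h1 : (fun s => fun i : Fin d => Φ c s (Sum.inl i)) = sol c := rfl
        rw [h1, (hsold c t).deriv]
        have h2 : (fun i : Fin d => Φ c t (Sum.inl i)) = sol c t := rfl
        rw [h2, hAapp, Matrix.neg_mulVec]
        simp
    · rintro ⟨hx, heq⟩
      obtain ⟨hv0, hu⟩ := (part1 x hx).1 heq
      set u : ℝ → (Fin d → ℝ) := fun t i => x t (Sum.inl i) with hu_def
      have hxd : ∀ t, HasDerivAt x (deriv x t) t :=
        fun t => (hx.differentiable (by simp) t).hasDerivAt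
      have hud : ∀ t, HasDerivAt u ((deriv x t) ∘ Sum.inl) t := by
        intro t
        have := clm_hasDerivAt Pl (hxd t)
        simpa [hPlapp, Function.comp_def] using this
      have huA : ∀ t, HasDerivAt u (A (u t)) t := by
        intro t
        have h1 := hu t
        rw [(hud t).deriv] at h1
        have h2 : (deriv x t) ∘ Sum.inl = -(Ω.mulVec (u t)) := by
          rw [add_eq_zero_iff_eq_neg] at h1
          exact h1
        have := hud t
        rw [h2] at this
        simpa [hAapp, Matrix.neg_mulVec] using this
      refine ⟨u 0, ?_⟩
      have hdiffeq : ∀ t, u t - sol (u 0) t = 0 := by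
        apply ode_unique_zero A
        · intro t
          rw [map_sub]; exact (huA t).sub (hsold (u 0) t)
        · simp [hsol0]
      funext t z
      have hueq : u t = sol (u 0) t := by
        have := hdiffeq t; rwa [sub_eq_zero] at this
      cases z with
      | inl i => exact (congrFun hueq i).symm
      | inr i => exact (hv0 t i).symm
  -- evaluation map
  set ψ : Sol →ₗ[ℝ] (Fin d → ℝ) :=
    { toFun := fun x => fun i => (x : ℝ → (Fin d ⊕ Fin a → ℝ)) 0 (Sum.inl i)
      map_add' := fun x y => rfl
      map_smul' := fun r x => rfl } with hψ
  have hψΦ : ∀ c (h : Φ c ∈ Sol), ψ ⟨Φ c, h⟩ = c := by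
    intro c h
    funext i
    show Φ c 0 (Sum.inl i) = c i
    rw [hΦapp]
    simp [hsol0]
  have hbij : Function.Bijective ψ := by
    constructor
    · intro x y hxy
      obtain ⟨cx, hcx⟩ := x.2
      obtain ⟨cy, hcy⟩ := y.2
      have hx' : x = ⟨Φ cx, by exact ⟨cx, rfl⟩⟩ := Subtype.ext hcx.symm
      have hy' : y = ⟨Φ cy, by exact ⟨cy, rfl⟩⟩ := Subtype.ext hcy.symm
      rw [hx', hy'] at hxy ⊢
      replace hxy : cx = cy := (hψΦ cx ⟨cx, rfl⟩).symm.trans (hxy.trans (hψΦ cy ⟨cy, rfl⟩))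
      simp [hxy]
    · intro c
      exact ⟨⟨Φ c, ⟨c, rfl⟩⟩, hψΦ c _⟩
  set e := LinearEquiv.ofBijective ψ hbij with he
  refine ⟨Sol, hmem, ?_, ⟨e, fun x => rfl⟩⟩
  rw [e.finrank_eq]
  exact Module.finrank_fin_fun ℝ
end
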